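/- Let N ≥ 1, s ∈ (0,1), R > 0, α₁, α₂ ∈ ℝ, γ = s − α₁ − α₂, and Φ an Orlicz function. Let A_k = {x ∈ ℝ^N : 2^k R ≤ |x| < 2^{k+1}R}. Then there exists C = C(s,α₁,α₂,N,R,Φ) > 0 such that for every u ∈ C_c¹(ℝ^N) and k ∈ ℤ: Φ(2^{−kγ}|(u)_{A_k} − (u)_{A_{k+1}}|) ≤ C·2^{−kN} ∫_{A_k∪A_{k+1}}∫_{A_k∪A_{k+1}} Φ(|x|^{α₁}|y|^{α₂}|D_s u(x,y)|) dμ. -/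

import Mathlib

/-!
The difference of the averages of `u` over `A k` and `A (k + 1)` is the average of
`u x - u y` over `A k ×ˢ A (k + 1)`, so Jensen's inequality bounds `Φ` of it by the average of
`Φ (2^(-kγ) |u x - u y|)`. On `A k ×ˢ A (k + 1)` the quantities `‖x‖`, `‖y‖`, `‖x - y‖` are all
comparable to `2^k R`, whence `2^(-kγ) ≤ M ‖x‖^α₁ ‖y‖^α₂ / ‖x - y‖^s`, and the Δ₂-condition
absorbs `M` into a constant factor `K` outside `Φ`. Finally `‖x - y‖^N ≤ (8 · 2^k R)^N` against
`|A k| |A (k + 1)| ≍ 2^(2kN)` produces the factor `2^(-kN)`.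
-/

open Set Filter MeasureTheory

/-- An Orlicz function: continuous, convex on `[0,∞)`, `Φ(0)=0`,
`Φ(t)/t → 0` as `t → 0⁺`, `Φ(t)/t → ∞` as `t → ∞`, Δ₂-condition. -/
structure IsOrlicz (Φ : ℝ → ℝ) : Prop where
  continuousOn : ContinuousOn Φ (Ici 0)
  convexOn : ConvexOn ℝ (Ici 0) Φ
  map_zero : Φ 0 = 0
  tendsto_zero : Tendsto (fun t => Φ t / t) (nhdsWithin 0 (Ioi 0)) (nhds 0)
  tendsto_atTop : Tendsto (fun t => Φ t / t) atTop atTop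
  delta2 : ∃ C > 0, ∀ t ≥ 0, Φ (2 * t) ≤ C * Φ t

open scoped ENNReal
open Metric Module

namespace IsOrlicz

variable {Φ : ℝ → ℝ}

theorem map_div_le_map_div (hΦ : IsOrlicz Φ) {x y : ℝ} (hx : 0 < x) (hxy : x ≤ y) :
    Φ x / x ≤ Φ y / y := by
  simpa [hΦ.map_zero] using hΦ.convexOn.secant_mono self_mem_Ici hx.le
    (hx.le.trans hxy) hx.ne' (hx.trans_le hxy).ne' hxy

theorem nonneg (hΦ : IsOrlicz Φ) {t : ℝ} (ht : 0 ≤ t) : 0 ≤ Φ t := by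
  rcases ht.eq_or_lt with rfl | ht
  · exact hΦ.map_zero.ge
  have : 0 ≤ Φ t / t := le_of_tendsto hΦ.tendsto_zero <| by
    filter_upwards [Ioo_mem_nhdsGT ht] with x hx using hΦ.map_div_le_map_div hx.1 hx.2.le
  exact (div_nonneg_iff.1 this).elim (·.1) fun h => absurd h.2 ht.not_ge

theorem monotoneOn (hΦ : IsOrlicz Φ) : MonotoneOn Φ (Ici 0) := by
  intro a ha b hb hab
  rcases (mem_Ici.1 ha).eq_or_lt with rfl | ha
  · rw [hΦ.map_zero]
    exact hΦ.nonneg hb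
  have := hΦ.map_div_le_map_div ha hab
  rw [div_le_div_iff₀ ha (ha.trans_le hab)] at this
  nlinarith [hΦ.nonneg (ha.le.trans hab)]

theorem map_two_pow_mul_le (hΦ : IsOrlicz Φ) : ∃ C > 0, ∀ (n : ℕ) {t : ℝ}, 0 ≤ t →
    Φ (2 ^ n * t) ≤ C ^ n * Φ t := by
  obtain ⟨C, hC, h2⟩ := hΦ.delta2
  refine ⟨C, hC, fun n => ?_⟩
  induction n with
  | zero => simp
  | succ n ih =>
    intro t ht
    calc Φ (2 ^ (n + 1) * t) = Φ (2 * (2 ^ n * t)) := by ring_nf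
      _ ≤ C * Φ (2 ^ n * t) := h2 _ (by positivity)
      _ ≤ C * (C ^ n * Φ t) := by gcongr; exact ih ht
      _ = C ^ (n + 1) * Φ t := by ring

theorem exists_map_mul_le (hΦ : IsOrlicz Φ) {M : ℝ} (hM : 0 ≤ M) :
    ∃ K > 0, ∀ t, 0 ≤ t → Φ (M * t) ≤ K * Φ t := by
  obtain ⟨C, hC, hpow⟩ := hΦ.map_two_pow_mul_le
  obtain ⟨n, hn⟩ := pow_unbounded_of_one_lt M one_lt_two
  refine ⟨C ^ n, by positivity, fun t ht => ?_⟩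
  calc Φ (M * t) ≤ Φ (2 ^ n * t) :=
        hΦ.monotoneOn (mul_nonneg hM ht) (mem_Ici.2 (by positivity)) (by gcongr)
    _ ≤ C ^ n * Φ t := hpow n ht

theorem measurable_comp (hΦ : IsOrlicz Φ) {α : Type*} [MeasurableSpace α] {f : α → ℝ}
    (hf : Measurable f) (hf₀ : ∀ x, 0 ≤ f x) : Measurable fun x => Φ (f x) := by
  have hc : Continuous fun t => Φ (max t 0) :=
    hΦ.continuousOn.comp_continuous (by fun_prop) fun t => le_max_right t 0
  convert hc.measurable.comp hf using 2 with x
  simp [max_eq_left (hf₀ x)]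

theorem map_mul_le_of_mul_rpow_le (hΦ : IsOrlicz Φ) {M K : ℝ}
    (hMK : ∀ t, 0 ≤ t → Φ (M * t) ≤ K * Φ t) (hK : 0 ≤ K) {c W v d D s n : ℝ} (hc : 0 ≤ c)
    (hW : 0 ≤ W) (hv : 0 ≤ v) (hd : 0 < d) (hdD : d ≤ D) (hn : 0 ≤ n)
    (hcW : c * d ^ s ≤ M * W) :
    Φ (c * v) ≤ K * D ^ n * (Φ (W * (v / d ^ s)) / d ^ n) := by
  have hds : 0 < d ^ s := Real.rpow_pos_of_pos hd s
  have hdn : 0 < d ^ n := Real.rpow_pos_of_pos hd n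
  have hw : 0 ≤ W * (v / d ^ s) := by positivity
  calc Φ (c * v) = Φ (c * d ^ s * (v / d ^ s)) := by field_simp
    _ ≤ Φ (M * (W * (v / d ^ s))) := by
      have hle : c * d ^ s * (v / d ^ s) ≤ M * (W * (v / d ^ s)) := by
        rw [← mul_assoc]; gcongr
      have h₀ : 0 ≤ c * d ^ s * (v / d ^ s) := by positivity
      exact hΦ.monotoneOn h₀ (h₀.trans hle) hle
    _ ≤ K * Φ (W * (v / d ^ s)) := hMK _ hw
    _ = K * d ^ n * (Φ (W * (v / d ^ s)) / d ^ n) := by field_simp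
    _ ≤ K * D ^ n * (Φ (W * (v / d ^ s)) / d ^ n) := by
      have := hΦ.nonneg hw
      gcongr

end IsOrlicz

theorem Real.mul_min_rpow_le_rpow {q a b t : ℝ} (hq : 0 < q) (ha : 0 < a)
    (ht : t ∈ Icc (q * a) (q * b)) (α : ℝ) : q ^ α * min (a ^ α) (b ^ α) ≤ t ^ α := by
  obtain ⟨t, rfl⟩ : ∃ t', t = q * t' := ⟨t / q, by field_simp⟩
  have ht' : t ∈ Icc a b := ⟨le_of_mul_le_mul_left ht.1 hq, le_of_mul_le_mul_left ht.2 hq⟩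
  rw [Real.mul_rpow hq.le (ha.le.trans ht'.1)]
  gcongr
  rcases le_total 0 α with hα | hα
  · exact (min_le_left _ _).trans (Real.rpow_le_rpow ha.le ht'.1 hα)
  · exact (min_le_right _ _).trans (Real.rpow_le_rpow_of_nonpos (ha.trans_le ht'.1) ht'.2 hα)

theorem exists_rpow_mul_rpow_le {R s : ℝ} (hR : 0 < R) (hs : 0 ≤ s) (α₁ α₂ : ℝ) :
    ∃ M ≥ 0, ∀ {q a b d : ℝ}, 0 < q → a ∈ Icc (q * R) (4 * (q * R)) →
      b ∈ Icc (q * R) (4 * (q * R)) → 0 ≤ d → d ≤ 8 * (q * R) →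
      q ^ (α₁ + α₂ - s) * d ^ s ≤ M * (a ^ α₁ * b ^ α₂) := by
  set c₁ := min (R ^ α₁) ((4 * R) ^ α₁)
  set c₂ := min (R ^ α₂) ((4 * R) ^ α₂)
  have hc₁ : 0 < c₁ := lt_min (by positivity) (by positivity)
  have hc₂ : 0 < c₂ := lt_min (by positivity) (by positivity)
  refine ⟨(8 * R) ^ s / (c₁ * c₂), by positivity, fun {q a b d} hq ha hb hd₀ hd => ?_⟩
  rw [mul_left_comm] at ha hb hd
  have ha' := Real.mul_min_rpow_le_rpow hq hR ha α₁
  have hb' := Real.mul_min_rpow_le_rpow hq hR hb α₂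
  calc q ^ (α₁ + α₂ - s) * d ^ s ≤ q ^ (α₁ + α₂ - s) * (q * (8 * R)) ^ s := by gcongr
    _ = (8 * R) ^ s / (c₁ * c₂) * (q ^ α₁ * c₁ * (q ^ α₂ * c₂)) := by
      rw [Real.mul_rpow hq.le (by positivity), Real.rpow_sub hq, Real.rpow_add hq]
      field_simp
    _ ≤ (8 * R) ^ s / (c₁ * c₂) * (a ^ α₁ * b ^ α₂) := by
      gcongr
      exact Real.rpow_nonneg ((by positivity : 0 ≤ q * R).trans ha.1) _

section ProductAverage

variable {α : Type*} [MeasurableSpace α] {μ : Measure α} [SFinite μ] {S T : Set α}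

theorem setAverage_prod_sub (hS : μ S ≠ ∞) (hT : μ T ≠ ∞) (hS₀ : μ S ≠ 0) (hT₀ : μ T ≠ 0)
    {u : α → ℝ} (huS : IntegrableOn u S μ) (huT : IntegrableOn u T μ) :
    ⨍ p in S ×ˢ T, (u p.1 - u p.2) ∂(μ.prod μ) = (⨍ x in S, u x ∂μ) - ⨍ y in T, u y ∂μ := by
  have : IsFiniteMeasure (μ.restrict S) := isFiniteMeasure_restrict.2 hS
  have : IsFiniteMeasure (μ.restrict T) := isFiniteMeasure_restrict.2 hT
  have hS' : 0 < μ.real S := ENNReal.toReal_pos hS₀ hS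
  have hT' : 0 < μ.real T := ENNReal.toReal_pos hT₀ hT
  rw [setAverage_eq, setAverage_eq, setAverage_eq, ← Measure.prod_restrict,
    integral_sub (huS.comp_fst _) (huT.comp_snd _), integral_fun_fst, integral_fun_snd,
    measureReal_prod_prod, measureReal_restrict_apply_univ, measureReal_restrict_apply_univ]
  simp only [smul_eq_mul]
  field_simp

theorem IsOrlicz.ofReal_map_mul_abs_setAverage_sub_le {Φ : ℝ → ℝ} (hΦ : IsOrlicz Φ)
    (hS : μ S ≠ ∞) (hT : μ T ≠ ∞) (hS₀ : μ S ≠ 0) (hT₀ : μ T ≠ 0) {u : α → ℝ}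
    (hu : Measurable u) {B : ℝ} (hB : ∀ x, |u x| ≤ B) {c : ℝ} (hc : 0 ≤ c) :
    ENNReal.ofReal (Φ (c * |(⨍ x in S, u x ∂μ) - ⨍ y in T, u y ∂μ|)) ≤
      ENNReal.ofReal (μ.real S * μ.real T)⁻¹ *
        ∫⁻ p in S ×ˢ T, ENNReal.ofReal (Φ (c * |u p.1 - u p.2|)) ∂(μ.prod μ) := by
  set f : α × α → ℝ := fun p => c * |u p.1 - u p.2|
  have hf₀ : ∀ p, 0 ≤ f p := fun p => by positivity
  have hfB : ∀ p, f p ≤ c * (B + B) := fun p => by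
    simp only [f]
    gcongr
    exact (abs_sub _ _).trans (add_le_add (hB _) (hB _))
  have hf : Measurable f := by fun_prop
  have hP : (μ.prod μ) (S ×ˢ T) ≠ ∞ := by
    rw [Measure.prod_prod]; exact ENNReal.mul_ne_top hS hT
  have hP₀ : (μ.prod μ) (S ×ˢ T) ≠ 0 := by
    rw [Measure.prod_prod]; exact mul_ne_zero hS₀ hT₀
  have hbdd {g : α × α → ℝ} (hg : Measurable g) (hg₀ : ∀ p, 0 ≤ g p) (C : ℝ)
      (hgC : ∀ p, g p ≤ C) : IntegrableOn g (S ×ˢ T) (μ.prod μ) :=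
    have : IsFiniteMeasure ((μ.prod μ).restrict (S ×ˢ T)) := isFiniteMeasure_restrict.2 hP
    (integrable_const C).mono' hg.aestronglyMeasurable
      (ae_of_all _ fun p => by rw [Real.norm_of_nonneg (hg₀ p)]; exact hgC p)
  have hfi := hbdd hf hf₀ _ hfB
  have hΦfi : IntegrableOn (fun p => Φ (f p)) (S ×ˢ T) (μ.prod μ) :=
    hbdd (hΦ.measurable_comp hf hf₀) (fun p => hΦ.nonneg (hf₀ p)) _ fun p =>
      hΦ.monotoneOn (hf₀ p) (hf₀ p |>.trans (hfB p)) (hfB p)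
  have huS : IntegrableOn u S μ :=
    Measure.integrableOn_of_bounded hS hu.aestronglyMeasurable (ae_of_all _ hB)
  have huT : IntegrableOn u T μ :=
    Measure.integrableOn_of_bounded hT hu.aestronglyMeasurable (ae_of_all _ hB)
  have hdiff : c * |(⨍ x in S, u x ∂μ) - ⨍ y in T, u y ∂μ| ≤ ⨍ p in S ×ˢ T, f p ∂(μ.prod μ) := by
    rw [← setAverage_prod_sub hS hT hS₀ hT₀ huS huT, setAverage_eq, setAverage_eq, smul_eq_mul,
      smul_eq_mul, abs_mul, abs_of_nonneg (by positivity), integral_const_mul]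
    calc c * (((μ.prod μ).real (S ×ˢ T))⁻¹ * |∫ p in S ×ˢ T, (u p.1 - u p.2) ∂(μ.prod μ)|)
        = ((μ.prod μ).real (S ×ˢ T))⁻¹ * (c * |∫ p in S ×ˢ T, (u p.1 - u p.2) ∂(μ.prod μ)|) := by
          ring
      _ ≤ _ := by gcongr; exact abs_integral_le_integral_abs
  calc ENNReal.ofReal (Φ (c * |(⨍ x in S, u x ∂μ) - ⨍ y in T, u y ∂μ|))
      ≤ ENNReal.ofReal (Φ (⨍ p in S ×ˢ T, f p ∂(μ.prod μ))) := by
        have h₀ : (0:ℝ) ≤ c * |(⨍ x in S, u x ∂μ) - ⨍ y in T, u y ∂μ| := by positivity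
        exact ENNReal.ofReal_le_ofReal (hΦ.monotoneOn h₀ (h₀.trans hdiff) hdiff)
    _ ≤ ENNReal.ofReal (⨍ p in S ×ˢ T, Φ (f p) ∂(μ.prod μ)) :=
        ENNReal.ofReal_le_ofReal <| hΦ.convexOn.map_set_average_le hΦ.continuousOn isClosed_Ici
          hP₀ hP (ae_of_all _ hf₀) hfi hΦfi
    _ = _ := by
        rw [ofReal_setAverage hΦfi (ae_of_all _ fun p => hΦ.nonneg (hf₀ p)), Measure.prod_prod,
          ENNReal.div_eq_inv_mul, measureReal_def, measureReal_def, ENNReal.ofReal_inv_of_pos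
          (mul_pos (ENNReal.toReal_pos hS₀ hS) (ENNReal.toReal_pos hT₀ hT)),
          ENNReal.ofReal_mul ENNReal.toReal_nonneg, ENNReal.ofReal_toReal hS,
          ENNReal.ofReal_toReal hT]

end ProductAverage

theorem IsOrlicz.ofReal_map_mul_abs_setAverage_sub_le_lintegral {Φ : ℝ → ℝ} (hΦ : IsOrlicz Φ)
    {M K : ℝ} (hMK : ∀ t, 0 ≤ t → Φ (M * t) ≤ K * Φ t) (hK : 0 ≤ K)
    {E : Type*} [SeminormedAddCommGroup E] [MeasurableSpace E] {μ : Measure E} [SFinite μ]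
    {S T : Set E} (hSm : MeasurableSet S) (hTm : MeasurableSet T) (hS : μ S ≠ ∞) (hT : μ T ≠ ∞)
    (hS₀ : μ S ≠ 0) (hT₀ : μ T ≠ 0) {u : E → ℝ} (hu : Measurable u) {B : ℝ}
    (hB : ∀ x, |u x| ≤ B) {c s α₁ α₂ D n : ℝ} (hc : 0 ≤ c) (hn : 0 ≤ n)
    (hST : ∀ x ∈ S, ∀ y ∈ T, 0 < ‖x - y‖ ∧ ‖x - y‖ ≤ D ∧
      c * ‖x - y‖ ^ s ≤ M * (‖x‖ ^ α₁ * ‖y‖ ^ α₂)) :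
    ENNReal.ofReal (Φ (c * |(⨍ x in S, u x ∂μ) - ⨍ y in T, u y ∂μ|)) ≤
      ENNReal.ofReal ((μ.real S * μ.real T)⁻¹ * (K * D ^ n)) *
        ∫⁻ x in S ∪ T, ∫⁻ y in S ∪ T,
          ENNReal.ofReal (Φ (‖x‖ ^ α₁ * ‖y‖ ^ α₂ * (|u x - u y| / ‖x - y‖ ^ s)) / ‖x - y‖ ^ n)
            ∂μ ∂μ := by
  set F : E × E → ℝ≥0∞ := fun p => ENNReal.ofReal
    (Φ (‖p.1‖ ^ α₁ * ‖p.2‖ ^ α₂ * (|u p.1 - u p.2| / ‖p.1 - p.2‖ ^ s)) / ‖p.1 - p.2‖ ^ n)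
  have hpt : ∀ p ∈ S ×ˢ T,
      ENNReal.ofReal (Φ (c * |u p.1 - u p.2|)) ≤ ENNReal.ofReal (K * D ^ n) * F p := by
    rintro ⟨x, y⟩ ⟨hx, hy⟩
    obtain ⟨hd₀, hd, hw⟩ := hST x hx y hy
    have hD : 0 ≤ D := hd₀.le.trans hd
    rw [← ENNReal.ofReal_mul (by positivity)]
    exact ENNReal.ofReal_le_ofReal <| hΦ.map_mul_le_of_mul_rpow_le hMK hK hc (by positivity)
      (abs_nonneg _) hd₀ hd hn hw
  calc _ ≤ ENNReal.ofReal (μ.real S * μ.real T)⁻¹ *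
        ∫⁻ p in S ×ˢ T, ENNReal.ofReal (Φ (c * |u p.1 - u p.2|)) ∂(μ.prod μ) :=
        hΦ.ofReal_map_mul_abs_setAverage_sub_le hS hT hS₀ hT₀ hu hB hc
    _ ≤ ENNReal.ofReal (μ.real S * μ.real T)⁻¹ *
        ∫⁻ p in S ×ˢ T, ENNReal.ofReal (K * D ^ n) * F p ∂(μ.prod μ) :=
      mul_le_mul_right (setLIntegral_mono' (hSm.prod hTm) hpt) _
    _ ≤ ENNReal.ofReal (μ.real S * μ.real T)⁻¹ * ENNReal.ofReal (K * D ^ n) *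
        ∫⁻ p in (S ∪ T) ×ˢ (S ∪ T), F p ∂(μ.prod μ) := by
      rw [lintegral_const_mul' _ _ ENNReal.ofReal_ne_top, ← mul_assoc]
      exact mul_le_mul_right (lintegral_mono_set (prod_mono subset_union_left subset_union_right)) _
    _ ≤ _ := by
      rw [← Measure.prod_restrict, ← ENNReal.ofReal_mul (by positivity)]
      exact mul_le_mul_right (lintegral_prod_le _) _

def annulus {E : Type*} [Norm E] (a b : ℝ) : Set E := {x | a ≤ ‖x‖ ∧ ‖x‖ < b}

section Annulus

theorem annulus_eq_ball_diff_ball {E : Type*} [SeminormedAddCommGroup E] (a b : ℝ) :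
    (annulus a b : Set E) = ball 0 b \ ball 0 a := by
  ext x; simp [annulus, and_comm]

theorem measurableSet_annulus {E : Type*} [SeminormedAddCommGroup E] [MeasurableSpace E]
    [OpensMeasurableSpace E] (a b : ℝ) : MeasurableSet (annulus a b : Set E) := by
  rw [annulus_eq_ball_diff_ball]
  exact measurableSet_ball.diff measurableSet_ball

theorem norm_mem_Icc_of_mem_annulus {E : Type*} [SeminormedAddCommGroup E] {ρ : ℝ} {x y : E}
    (hx : x ∈ annulus ρ (2 * ρ)) (hy : y ∈ annulus (2 * ρ) (2 * (2 * ρ))) :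
    ‖x‖ ∈ Icc ρ (4 * ρ) ∧ ‖y‖ ∈ Icc ρ (4 * ρ) ∧ 0 < ‖x - y‖ ∧ ‖x - y‖ ≤ 8 * ρ := by
  obtain ⟨hx₁, hx₂⟩ := hx
  obtain ⟨hy₁, hy₂⟩ := hy
  refine ⟨⟨hx₁, by linarith⟩, ⟨by linarith, by linarith⟩, ?_, ?_⟩
  · linarith [norm_sub_norm_le y x, norm_sub_rev x y]
  · linarith [norm_sub_le x y]

variable {E : Type*} [NormedAddCommGroup E] [NormedSpace ℝ E] [MeasurableSpace E] [BorelSpace E]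
  [FiniteDimensional ℝ E] (μ : Measure E) [μ.IsAddHaarMeasure]

theorem addHaar_real_annulus_two_mul {r : ℝ} (hr : 0 < r) :
    μ.real (annulus r (2 * r) : Set E) =
      r ^ finrank ℝ E * ((2 ^ finrank ℝ E - 1) * μ.real (ball 0 1)) := by
  rw [annulus_eq_ball_diff_ball,
    measureReal_sdiff (ball_subset_ball (by linarith)) measurableSet_ball, measureReal_def,
    measureReal_def, measureReal_def, Measure.addHaar_ball_of_pos μ _ hr,
    Measure.addHaar_ball_of_pos μ _ (by positivity), ENNReal.toReal_mul, ENNReal.toReal_mul,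
    ENNReal.toReal_ofReal (by positivity), ENNReal.toReal_ofReal (by positivity)]
  ring

theorem IsOrlicz.exists_ofReal_map_mul_abs_setAverage_annulus_sub_le {Φ : ℝ → ℝ}
    (hΦ : IsOrlicz Φ) {M K : ℝ} (hMK : ∀ t, 0 ≤ t → Φ (M * t) ≤ K * Φ t) (hK : 0 < K)
    (hE : 0 < finrank ℝ E) :
    ∃ C > 0, ∀ {ρ : ℝ}, 0 < ρ → ∀ {u : E → ℝ} {B c s α₁ α₂ : ℝ}, Measurable u →
      (∀ x, |u x| ≤ B) → 0 ≤ c → (∀ {a b d : ℝ}, a ∈ Icc ρ (4 * ρ) → b ∈ Icc ρ (4 * ρ) →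
        0 ≤ d → d ≤ 8 * ρ → c * d ^ s ≤ M * (a ^ α₁ * b ^ α₂)) →
      ENNReal.ofReal (Φ (c * |(⨍ x in annulus ρ (2 * ρ), u x ∂μ) -
          ⨍ y in annulus (2 * ρ) (2 * (2 * ρ)), u y ∂μ|)) ≤
        ENNReal.ofReal (C / ρ ^ finrank ℝ E) *
          ∫⁻ x in annulus ρ (2 * ρ) ∪ annulus (2 * ρ) (2 * (2 * ρ)),
            ∫⁻ y in annulus ρ (2 * ρ) ∪ annulus (2 * ρ) (2 * (2 * ρ)),
              ENNReal.ofReal (Φ (‖x‖ ^ α₁ * ‖y‖ ^ α₂ * (|u x - u y| / ‖x - y‖ ^ s)) /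
                ‖x - y‖ ^ (finrank ℝ E : ℝ)) ∂μ ∂μ := by
  set κ := (2 ^ finrank ℝ E - 1) * μ.real (ball (0 : E) 1)
  have hκ : 0 < κ := mul_pos (by linarith [one_lt_pow₀ (one_lt_two (α := ℝ)) hE.ne'])
    (ENNReal.toReal_pos (measure_ball_pos _ _ one_pos).ne' measure_ball_lt_top.ne)
  have hpos {r : ℝ} (hr : 0 < r) : 0 < μ (annulus r (2 * r)) ∧ μ (annulus r (2 * r)) < ∞ := by
    have h := addHaar_real_annulus_two_mul μ hr
    rw [measureReal_def] at h
    exact ENNReal.toReal_pos_iff.1 (by rw [h]; positivity)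
  refine ⟨K * 4 ^ finrank ℝ E / κ ^ 2, by positivity, fun {ρ} hρ u B c s α₁ α₂ hu hB hc hw => ?_⟩
  have h2ρ : 0 < 2 * ρ := by positivity
  refine (hΦ.ofReal_map_mul_abs_setAverage_sub_le_lintegral (s := s) (α₁ := α₁) (α₂ := α₂)
    (D := 8 * ρ) (n := finrank ℝ E) hMK hK.le (measurableSet_annulus _ _)
    (measurableSet_annulus _ _) (hpos hρ).2.ne (hpos h2ρ).2.ne (hpos hρ).1.ne' (hpos h2ρ).1.ne'
    hu hB hc (Nat.cast_nonneg _) fun x hx y hy => ?_).trans_eq ?_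
  · obtain ⟨hxρ, hyρ, hd₀, hd⟩ := norm_mem_Icc_of_mem_annulus hx hy
    exact ⟨hd₀, hd, hw hxρ hyρ (norm_nonneg _) hd⟩
  · congr 2
    rw [addHaar_real_annulus_two_mul μ hρ, addHaar_real_annulus_two_mul μ h2ρ, Real.rpow_natCast,
      show (8:ℝ) = 2 * 4 by norm_num]
    simp only [κ, mul_pow]
    field_simp

end Annulus

/-- Annular estimate (ii): the Orlicz value of the difference of averages of
`u` over consecutive dyadic annuli is controlled by the weighted fractional
seminorm over the union of the two annuli. -/
theorem annulus_estimate_two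
    (N : ℕ) (hN : 1 ≤ N) (s α₁ α₂ R : ℝ) (hs : s ∈ Ioo (0:ℝ) 1) (hR : 0 < R)
    (Φ : ℝ → ℝ) (hΦ : IsOrlicz Φ) (γ : ℝ) (hγ : γ = s - α₁ - α₂)
    (A : ℤ → Set (EuclideanSpace ℝ (Fin N)))
    (hA : ∀ k, A k = {x | (2:ℝ) ^ k * R ≤ ‖x‖ ∧ ‖x‖ < (2:ℝ) ^ (k + 1) * R}) :
    ∃ C > 0, ∀ u : EuclideanSpace ℝ (Fin N) → ℝ,
      ContDiff ℝ 1 u → HasCompactSupport u → ∀ k : ℤ,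
      ENNReal.ofReal
          (Φ ((2:ℝ) ^ (-(k:ℝ) * γ) *
            |(⨍ x in A k, u x) - ⨍ x in A (k + 1), u x|)) ≤
        ENNReal.ofReal (C * (2:ℝ) ^ (-(k:ℝ) * N)) *
          ∫⁻ x in A k ∪ A (k + 1), ∫⁻ y in A k ∪ A (k + 1), ENNReal.ofReal
            (Φ (‖x‖ ^ α₁ * ‖y‖ ^ α₂ * (|u x - u y| / ‖x - y‖ ^ s)) /
              ‖x - y‖ ^ (N:ℝ)) := by
  obtain ⟨M, hM₀, hM⟩ := exists_rpow_mul_rpow_le hR hs.1.le α₁ α₂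
  obtain ⟨K, hK, hMK⟩ := hΦ.exists_map_mul_le hM₀
  obtain ⟨C, hC, hest⟩ := hΦ.exists_ofReal_map_mul_abs_setAverage_annulus_sub_le
    (volume : Measure (EuclideanSpace ℝ (Fin N))) hMK hK (by rw [finrank_euclideanSpace_fin]; omega)
  refine ⟨C / R ^ N, by positivity, fun u hu hsupp k => ?_⟩
  obtain ⟨B, hB⟩ := hu.continuous.bounded_above_of_compact_support hsupp
  have h2 (j : ℤ) : (2:ℝ) ^ (j + 1) * R = 2 * (2 ^ j * R) := by
    rw [zpow_add_one₀ two_ne_zero]; ring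
  have hA' (j : ℤ) : A j = annulus (2 ^ j * R) (2 * (2 ^ j * R)) := by rw [hA, h2]; rfl
  have key := hest (by positivity : (0:ℝ) < 2 ^ k * R) hu.continuous.measurable
    (fun x => (Real.norm_eq_abs _).symm ▸ hB x) (by positivity) (hM (by positivity))
  rw [finrank_euclideanSpace_fin, ← hA', ← h2, ← hA'] at key
  rw [show -(k:ℝ) * γ = k * (α₁ + α₂ - s) by rw [hγ]; ring, Real.rpow_intCast_mul two_pos.le]
  refine key.trans_eq ?_
  congr 2
  rw [neg_mul, ← mul_neg, Real.rpow_intCast_mul two_pos.le, Real.rpow_neg (by positivity),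
    Real.rpow_natCast, mul_pow]
  field_simp
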